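/- arXiv:2411.15829 — 6 statements merged into one kernel-verified Lean document; each statement's English description precedes it below -/
import Mathlib

section
/- The twelve functions t1, t2, t3, t4, s11, s22, s33, s44, s12, s23, s34, s14 on quadruples of 2×2 complex matrices are algebraically independent over ℂ; equivalently, the ℂ-subalgebra R of Maps(M2(ℂ)^4, ℂ) that they generate is a polynomial ring in these twelve generators. -/
/-- The 2×2 complex matrices. -/
abbrev M2 : Type := Matrix (Fin 2) (Fin 2) ℂ

/-- The traceless part `[[y]] = y - (1/2)·tr(y)·I` of a 2×2 complex matrix. -/
noncomputable def tl (y : M2) : M2 := y - (Matrix.trace y / 2) • (1 : M2)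

/-- The function `t_i` on quadruples of 2×2 matrices: `x ↦ tr(x_i)`.
(Indices are 0-based: `tfun 0` is `t₁`, ..., `tfun 3` is `t₄`.) -/
noncomputable def tfun (i : Fin 4) : (Fin 4 → M2) → ℂ := fun x => Matrix.trace (x i)

/-- The function `s_{ij}` on quadruples of 2×2 matrices: `x ↦ tr([[x_i]]·[[x_j]])`. -/
noncomputable def sfun (i j : Fin 4) : (Fin 4 → M2) → ℂ :=
  fun x => Matrix.trace (tl (x i) * tl (x j))

/-!
The evaluation map `M₂(ℂ)⁴ → ℂ¹²` of the twelve functions is surjective, and a polynomial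
vanishing on all of `ℂ¹²` is zero. Writing `xᵢ = (tᵢ / 2) • 1 + Aᵢ` with `Aᵢ` traceless gives
`sᵢⱼ = tr (Aᵢ Aⱼ)`, which in the coordinates `Aᵢ = [[u, p], [q, -u]]` is the nondegenerate form
`2 u u' + p q' + q p'`. Since `s₁₃` and `s₂₄` are not prescribed, take `A₁` and `A₃`
off-diagonal with the required norms and linearly independent; then `A₂` and `A₄`, which are
paired only with `A₁` and `A₃`, are found by solving a 2×2 linear system for their off-diagonal
entries and taking a square root for the diagonal one.
-/

theorem algebraicIndependent_of_surjective {R S ι : Type*} [CommRing R] [IsDomain R] [Infinite R]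
    {f : ι → S → R} (hf : Function.Surjective fun x i => f i x) : AlgebraicIndependent R f := by
  rw [algebraicIndependent_iff]
  intro p hp
  refine MvPolynomial.funext fun c => ?_
  obtain ⟨x, rfl⟩ := hf c
  have hx := DFunLike.congr_fun (MvPolynomial.comp_aeval f (Pi.evalAlgHom R (fun _ => R) x)) p
  simp only [AlgHom.comp_apply, hp, map_zero] at hx
  simp [hx]

section Field

variable {K : Type*} [Field K]

theorem exists_mul_add_mul_eq_of_det_ne_zero {a b c d : K} (hdet : a * d - b * c ≠ 0) (e f : K) :
    ∃ x y, a * x + b * y = e ∧ c * x + d * y = f := by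
  refine ⟨(e * d - b * f) / (a * d - b * c), (a * f - c * e) / (a * d - b * c), ?_, ?_⟩ <;>
    rw [mul_div_assoc', mul_div_assoc', ← add_div, div_eq_iff hdet] <;> ring

theorem exists_two_mul_mul_eq_and_ne [CharZero K] (a s : K) :
    ∃ p q : K, 2 * (p * q) = s ∧ q ≠ a * p := by
  by_cases hs : s = 2 * a
  · by_cases ha : a = 0
    · exact ⟨0, 1, by simp [hs, ha], by simp⟩
    · refine ⟨2, a / 2, by rw [hs]; ring, fun h => ha ?_⟩
      have : (3 : K) * a = 0 := by linear_combination -2 * h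
      simpa using this
  · exact ⟨1, s / 2, by ring, fun h => hs (by linear_combination 2 * h)⟩

def tracelessMatrix (u p q : K) : Matrix (Fin 2) (Fin 2) K := !![u, p; q, -u]

@[simp]
theorem trace_tracelessMatrix (u p q : K) : (tracelessMatrix u p q).trace = 0 := by
  simp [tracelessMatrix, Matrix.trace_fin_two_of]

theorem trace_tracelessMatrix_mul (u p q u' p' q' : K) :
    (tracelessMatrix u p q * tracelessMatrix u' p' q').trace = 2 * u * u' + p * q' + q * p' := by
  rw [tracelessMatrix, tracelessMatrix, Matrix.mul_fin_two, Matrix.trace_fin_two_of]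
  ring

variable [IsAlgClosed K] [CharZero K]

/-- Since the off-diagonal parts of the two fixed matrices are linearly independent, the two
pairings determine the off-diagonal part of `X`; its diagonal entry is then a square root. -/
theorem exists_traceless_trace_mul_eq {a p₃ q₃ : K} (h : q₃ ≠ a * p₃) (s₁ s₃ s : K) :
    ∃ X : Matrix (Fin 2) (Fin 2) K, X.trace = 0 ∧ (tracelessMatrix 0 1 a * X).trace = s₁ ∧
      (tracelessMatrix 0 p₃ q₃ * X).trace = s₃ ∧ (X * X).trace = s := by
  have hdet : a * p₃ - 1 * q₃ ≠ 0 := fun h' => h (by linear_combination -h')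
  obtain ⟨p, q, h₁, h₃⟩ := exists_mul_add_mul_eq_of_det_ne_zero hdet s₁ s₃
  obtain ⟨u, hu⟩ := IsAlgClosed.exists_eq_mul_self ((s - 2 * (p * q)) / 2)
  refine ⟨tracelessMatrix u p q, trace_tracelessMatrix u p q, ?_, ?_, ?_⟩ <;>
    rw [trace_tracelessMatrix_mul]
  · linear_combination h₁
  · linear_combination h₃
  · linear_combination -2 * hu

theorem exists_traceless_quadruple (s₁₁ s₂₂ s₃₃ s₄₄ s₁₂ s₂₃ s₃₄ s₁₄ : K) :
    ∃ A₁ A₂ A₃ A₄ : Matrix (Fin 2) (Fin 2) K,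
      A₁.trace = 0 ∧ A₂.trace = 0 ∧ A₃.trace = 0 ∧ A₄.trace = 0 ∧
      (A₁ * A₁).trace = s₁₁ ∧ (A₂ * A₂).trace = s₂₂ ∧ (A₃ * A₃).trace = s₃₃ ∧
      (A₄ * A₄).trace = s₄₄ ∧ (A₁ * A₂).trace = s₁₂ ∧ (A₂ * A₃).trace = s₂₃ ∧
      (A₃ * A₄).trace = s₃₄ ∧ (A₁ * A₄).trace = s₁₄ := by
  obtain ⟨p₃, q₃, h₃₃, h⟩ := exists_two_mul_mul_eq_and_ne (s₁₁ / 2) s₃₃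
  obtain ⟨A₂, hA₂, h₁₂, h₂₃, h₂₂⟩ := exists_traceless_trace_mul_eq h s₁₂ s₂₃ s₂₂
  obtain ⟨A₄, hA₄, h₁₄, h₃₄, h₄₄⟩ := exists_traceless_trace_mul_eq h s₁₄ s₃₄ s₄₄
  refine ⟨tracelessMatrix 0 1 (s₁₁ / 2), A₂, tracelessMatrix 0 p₃ q₃, A₄, by simp, hA₂, by simp,
    hA₄, ?_, h₂₂, ?_, h₄₄, h₁₂, by rwa [Matrix.trace_mul_comm], h₃₄, h₁₄⟩ <;>
    rw [trace_tracelessMatrix_mul]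
  · ring
  · linear_combination h₃₃

end Field

theorem trace_half_smul_one_add {A : M2} (hA : A.trace = 0) (t : ℂ) :
    ((t / 2) • (1 : M2) + A).trace = t := by
  simp [hA]

theorem tl_half_smul_one_add {A : M2} (hA : A.trace = 0) (t : ℂ) :
    tl ((t / 2) • (1 : M2) + A) = A := by
  rw [tl, trace_half_smul_one_add hA]
  abel

/-- The twelve functions t₁, t₂, t₃, t₄, s₁₁, s₂₂, s₃₃, s₄₄, s₁₂, s₂₃, s₃₄, s₁₄
are algebraically independent over ℂ. -/
theorem stmt_0 :
    AlgebraicIndependent ℂ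
      (![tfun 0, tfun 1, tfun 2, tfun 3,
         sfun 0 0, sfun 1 1, sfun 2 2, sfun 3 3,
         sfun 0 1, sfun 1 2, sfun 2 3, sfun 0 3] : Fin 12 → ((Fin 4 → M2) → ℂ)) := by
  refine algebraicIndependent_of_surjective fun c => ?_
  obtain ⟨A₁, A₂, A₃, A₄, hA₁, hA₂, hA₃, hA₄, h₁₁, h₂₂, h₃₃, h₄₄, h₁₂, h₂₃, h₃₄, h₁₄⟩ :=
    exists_traceless_quadruple (c 4) (c 5) (c 6) (c 7) (c 8) (c 9) (c 10) (c 11)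
  refine ⟨![(c 0 / 2) • 1 + A₁, (c 1 / 2) • 1 + A₂, (c 2 / 2) • 1 + A₃, (c 3 / 2) • 1 + A₄], ?_⟩
  funext i
  fin_cases i <;>
    simp [tfun, sfun, tl_half_smul_one_add, hA₁, hA₂, hA₃, hA₄, h₁₁, h₂₂, h₃₃, h₄₄, h₁₂,
      h₂₃, h₃₄, h₁₄]
end

section
/- The eight functions t1, t2, t3, t4, t12, t23, t34, t14 on quadruples of elements of SL(2,ℂ) are algebraically independent over ℂ; equivalently, the ℂ-subalgebra Q of Maps(SL(2,ℂ)^4, ℂ) that they generate is a polynomial ring in these eight generators. -/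
/-- The group SL(2,ℂ). -/
abbrev SL2 : Type := Matrix.SpecialLinearGroup (Fin 2) ℂ

/-- The trace function `t_i` on quadruples in SL(2,ℂ): `ρ ↦ tr(ρ_i)`.
(Indices are 0-based: `tr1 0` is `t₁`, ..., `tr1 3` is `t₄`.) -/
noncomputable def tr1 (i : Fin 4) : (Fin 4 → SL2) → ℂ :=
  fun ρ => Matrix.trace (ρ i : M2)

/-- The trace function `t_{ij}` on quadruples in SL(2,ℂ): `ρ ↦ tr(ρ_i·ρ_j)`. -/
noncomputable def tr2 (i j : Fin 4) : (Fin 4 → SL2) → ℂ :=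
  fun ρ => Matrix.trace ((ρ i : M2) * (ρ j : M2))

/-- The trace function `t_{ijk}` on quadruples in SL(2,ℂ): `ρ ↦ tr(ρ_i·ρ_j·ρ_k)`. -/
noncomputable def tr3 (i j k : Fin 4) : (Fin 4 → SL2) → ℂ :=
  fun ρ => Matrix.trace ((ρ i : M2) * (ρ j : M2) * (ρ k : M2))

/-- The trace function `t₁₂₃₄` on quadruples in SL(2,ℂ): `ρ ↦ tr(ρ₁·ρ₂·ρ₃·ρ₄)`. -/
noncomputable def tr4 : (Fin 4 → SL2) → ℂ :=
  fun ρ => Matrix.trace ((ρ 0 : M2) * (ρ 1 : M2) * (ρ 2 : M2) * (ρ 3 : M2))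

open Matrix Polynomial

theorem algebraicIndependent_of_surjective_eval {R X ι : Type*} [CommRing R] [IsDomain R]
    [Infinite R] (f : ι → X → R) (hf : Function.Surjective fun x i => f i x) :
    AlgebraicIndependent R f := by
  refine algebraicIndependent_iff.mpr fun P hP => MvPolynomial.funext fun v => ?_
  obtain ⟨x, rfl⟩ := hf v
  have hPx := congrArg (Pi.evalAlgHom R (fun _ => R) x) hP
  rw [MvPolynomial.comp_aeval_apply, map_zero] at hPx
  simpa [MvPolynomial.coe_aeval_eq_eval] using hPx

theorem Complex.exists_quadratic_eq_zero {a : ℂ} (b c : ℂ) (ha : a ≠ 0) :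
    ∃ x, a * (x * x) + b * x + c = 0 :=
  _root_.exists_quadratic_eq_zero ha (IsAlgClosed.exists_eq_mul_self _)

theorem Polynomial.X_sq_add_C_mul_X_add_C_ne_zero {R : Type*} [CommRing R] [Nontrivial R]
    (b c : R) : (X ^ 2 + C b * X + C c : R[X]) ≠ 0 := fun h => by
  simpa using congrArg (coeff · 2) h

theorem Polynomial.exists_eval_ne_zero_of_ne_zero {R : Type*} [CommRing R] [IsDomain R]
    [Infinite R] {p : R[X]} (hp : p ≠ 0) : ∃ x, p.eval x ≠ 0 := by
  by_contra! h
  exact hp (zero_of_eval_zero p h)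

/-- The three trace conditions force `X = !![x, y; z, a - x]` with `y`, `z` affine in `x`
(solvable since `l ≠ m`); along this line `(l - m) ^ 2 * (det X - 1)` is a quadratic in `x`
with leading coefficient `-((l - m) ^ 2 + (q + l * p) * (q + m * p))`. -/
theorem exists_SL2_with_traces {p q l m : ℂ} (hlm : l ≠ m)
    (hD : (l - m) ^ 2 + (q + l * p) * (q + m * p) ≠ 0) (a b c : ℂ) :
    ∃ X : SL2, trace (X : M2) = a ∧ trace (!![p, 1; -1, 0] * (X : M2)) = b ∧
      trace ((X : M2) * !![0, l; -m, q]) = c := by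
  have hr : l - m ≠ 0 := sub_ne_zero.mpr hlm
  set αl := c - a * q - l * b
  set αm := c - a * q - m * b
  obtain ⟨x, hx⟩ := Complex.exists_quadratic_eq_zero
    ((l - m) ^ 2 * a - αl * (q + m * p) - αm * (q + l * p)) (-((l - m) ^ 2 + αl * αm))
    (neg_ne_zero.mpr hD)
  set y := (αl + (q + l * p) * x) / (l - m)
  set z := (αm + (q + m * p) * x) / (l - m)
  have hdet : det !![x, y; z, a - x] = 1 := by
    rw [det_fin_two_of]
    simp only [y, z]
    field_simp
    linear_combination hx
  refine ⟨⟨!![x, y; z, a - x], hdet⟩, ?_, ?_, ?_⟩ <;>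
    simp only [mul_fin_two, trace_fin_two_of]
  · ring
  all_goals
    simp only [y, z, αl, αm]
    field_simp
    ring

/-- Writing `s = l + m`, both `l ≠ m` and the nondegeneracy condition become polynomial
conditions on `s`, which a generic `s` satisfies; `l` and `m` are then the roots of
`T ^ 2 - s * T + 1`. -/
theorem exists_nondegenerate_params (p q : ℂ) :
    ∃ l m : ℂ, l * m = 1 ∧ l ≠ m ∧ (l - m) ^ 2 + (q + l * p) * (q + m * p) ≠ 0 := by
  obtain ⟨s, hs⟩ := exists_eval_ne_zero_of_ne_zero
    (mul_ne_zero (X_sq_add_C_mul_X_add_C_ne_zero (0 : ℂ) (-4))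
      (X_sq_add_C_mul_X_add_C_ne_zero (p * q) (p ^ 2 + q ^ 2 - 4)))
  simp only [eval_mul, eval_add, eval_pow, eval_C, eval_X, mul_ne_zero_iff] at hs
  obtain ⟨l, hl⟩ := Complex.exists_quadratic_eq_zero (-s) 1 one_ne_zero
  have hlm : l * (s - l) = 1 := by linear_combination -hl
  have hsq : (l - (s - l)) ^ 2 = s ^ 2 + 0 * s + -4 := by linear_combination -4 * hlm
  refine ⟨l, s - l, hlm, fun h => hs.1 ?_, ?_⟩
  · rw [← hsq, ← h]
    ring
  · rw [show (l - (s - l)) ^ 2 + (q + l * p) * (q + (s - l) * p) =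
      s ^ 2 + p * q * s + (p ^ 2 + q ^ 2 - 4) by linear_combination (p ^ 2 - 4) * hlm]
    exact hs.2

theorem surjective_traces :
    Function.Surjective fun (ρ : Fin 4 → SL2) (k : Fin 8) =>
      (![tr1 0, tr1 1, tr1 2, tr1 3, tr2 0 1, tr2 1 2, tr2 2 3, tr2 0 3] :
        Fin 8 → ((Fin 4 → SL2) → ℂ)) k ρ := by
  intro v
  obtain ⟨l, m, hlm, hne, hD⟩ := exists_nondegenerate_params (v 0) (v 2)
  obtain ⟨X, hX, hAX, hXB⟩ := exists_SL2_with_traces hne hD (v 1) (v 4) (v 5)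
  obtain ⟨Y, hY, hAY, hYB⟩ := exists_SL2_with_traces hne hD (v 3) (v 7) (v 6)
  let A : SL2 := ⟨!![v 0, 1; -1, 0], by simp [det_fin_two_of]⟩
  let B : SL2 := ⟨!![0, l; -m, v 2], by rw [det_fin_two_of]; linear_combination hlm⟩
  refine ⟨![A, X, B, Y], funext fun k => ?_⟩
  fin_cases k <;> simp only [tr1, tr2, A, B, Fin.isValue, Fin.reduceFinMk, cons_val,
    trace_fin_two_of]
  all_goals first | assumption | (rw [trace_mul_comm]; assumption) | ring1

/-- The eight functions t₁, t₂, t₃, t₄, t₁₂, t₂₃, t₃₄, t₁₄ on quadruples of elements of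
SL(2,ℂ) are algebraically independent over ℂ. -/
theorem stmt_4 :
    AlgebraicIndependent ℂ
      (![tr1 0, tr1 1, tr1 2, tr1 3,
         tr2 0 1, tr2 1 2, tr2 2 3, tr2 0 3] : Fin 8 → ((Fin 4 → SL2) → ℂ)) :=
  algebraicIndependent_of_surjective_eval _ surjective_traces
end

section
/- Let R = ℤ[x, x^{-1}] be the Laurent polynomial ring over ℤ in one variable x, and let φ : R → ℂ be the ring homomorphism determined by φ(x) = −1. Let M be a torsion-free R-module, V a ℂ-vector space, and f : M → V an additive map satisfying f(r·m) = φ(r)·f(m) for all r ∈ R and m ∈ M. If a family B of elements of M generates M as an R-module and the family (f(b))_{b ∈ B} is linearly independent over ℂ, then B is linearly independent over R; hence B is a basis of M as an R-module. -/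
/-!
A relation `∑ gᵢ • bᵢ = 0` maps under `f` to `∑ φ(gᵢ) • f(bᵢ) = 0`, so every `φ(gᵢ)` vanishes and
`T + 1` divides every `gᵢ`. Since `M` is torsion-free, `T + 1` can be cancelled from the relation,
and repeating the argument shows that every `gᵢ` is divisible by all powers of `T + 1`. In the
Noetherian domain `ℤ[T;T⁻¹]` only `0` is divisible by all powers of a non-unit.
-/

open LaurentPolynomial Polynomial

instance LaurentPolynomial.isNoetherianRing {R : Type*} [CommRing R] [IsNoetherianRing R] :
    IsNoetherianRing R[T;T⁻¹] :=
  IsLocalization.isNoetherianRing (Submonoid.powers (X : R[X])) _ inferInstance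

theorem eq_zero_of_forall_pow_dvd {α : Type*} [CommMonoidWithZero α] [IsCancelMulZero α]
    [WfDvdMonoid α] {a b : α} (ha : ¬IsUnit a) (h : ∀ n : ℕ, a ^ n ∣ b) : b = 0 := by
  by_contra hb
  exact FiniteMultiplicity.not_iff_forall.mpr h (FiniteMultiplicity.of_not_isUnit ha hb)

theorem LaurentPolynomial.T_one_add_one_dvd_of_map_eq_zero {S : Type*} [CommRing S] [CharZero S]
    (φ : ℤ[T;T⁻¹] →+* S) (hφ : φ (T 1) = -1) {c : ℤ[T;T⁻¹]} (hc : φ c = 0) : T 1 + 1 ∣ c := by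
  obtain ⟨n, p, hp⟩ := exists_T_pow c
  have hcomp : φ.comp toLaurent = eval₂RingHom (Int.castRingHom S) (-1 : S) :=
    ringHom_ext' (RingHom.ext_int _ _) (by simp [hφ])
  have hroot : p.IsRoot (-1) := by
    have hφp : φ (toLaurent p) = 0 := by rw [hp, map_mul, hc, zero_mul]
    have hcast : (-1 : S) = Int.castRingHom S (-1) := by simp
    rw [← RingHom.comp_apply, hcomp, coe_eval₂RingHom, hcast, eval₂_at_apply] at hφp
    exact Int.cast_eq_zero.mp hφp
  have hdvd : T 1 + 1 ∣ toLaurent p := by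
    simpa using map_dvd toLaurent (dvd_iff_isRoot.mpr hroot)
  rw [hp] at hdvd
  exact (isUnit_T (n : ℤ)).dvd_mul_right.mp hdvd

section RelationsModulo

variable {R M ι : Type*} [CommRing R] [IsDomain R] [AddCommGroup M] [Module R M]
  [NoZeroSMulDivisors R M] {a : R} {b : ι → M}

theorem pow_dvd_of_sum_smul_eq_zero (ha : a ≠ 0)
    (h : ∀ (s : Finset ι) (g : ι → R), ∑ i ∈ s, g i • b i = 0 → ∀ i ∈ s, a ∣ g i) (n : ℕ)
    (s : Finset ι) (g : ι → R) (hs : ∑ i ∈ s, g i • b i = 0) : ∀ i ∈ s, a ^ n ∣ g i := by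
  induction n generalizing g with
  | zero => simp
  | succ n ih =>
    have hquot : ∀ j, ∃ e, j ∈ s → g j = a * e := fun j => by
      by_cases hj : j ∈ s
      · obtain ⟨e, he⟩ := h s g hs j hj
        exact ⟨e, fun _ => he⟩
      · exact ⟨0, fun hj' => absurd hj' hj⟩
    choose e he using hquot
    have hse : ∑ j ∈ s, e j • b j = 0 := by
      refine (smul_eq_zero.mp ?_).resolve_left ha
      rw [Finset.smul_sum, ← hs]
      exact Finset.sum_congr rfl fun j hj => by rw [he j hj, mul_smul]
    intro i hi
    rw [he i hi, pow_succ']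
    exact mul_dvd_mul_left a (ih e hse i hi)

theorem linearIndependent_of_relations_dvd [WfDvdMonoid R] (ha : ¬IsUnit a)
    (h : ∀ (s : Finset ι) (g : ι → R), ∑ i ∈ s, g i • b i = 0 → ∀ i ∈ s, a ∣ g i) :
    LinearIndependent R b := by
  rw [linearIndependent_iff']
  intro s g hs i hi
  rcases eq_or_ne a 0 with rfl | ha0
  · exact zero_dvd_iff.mp (h s g hs i hi)
  · exact eq_zero_of_forall_pow_dvd ha fun n => pow_dvd_of_sum_smul_eq_zero ha0 h n s g hs i hi

end RelationsModulo

/-- Let `R = ℤ[x, x⁻¹]` be the Laurent polynomial ring over ℤ, `φ : R → ℂ` the ring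
homomorphism sending `x` to `−1`, `M` a torsion-free `R`-module, `V` a ℂ-vector space,
and `f : M → V` an additive map satisfying `f(r • m) = φ(r) • f(m)`. If a family `b`
generates `M` as an `R`-module and `(f (b i))ᵢ` is ℂ-linearly independent, then `b`
is `R`-linearly independent; hence `b` is a basis of `M` over `R`. -/
theorem stmt_7 {M V : Type*} [AddCommGroup M] [Module (LaurentPolynomial ℤ) M]
    [NoZeroSMulDivisors (LaurentPolynomial ℤ) M]
    [AddCommGroup V] [Module ℂ V]
    (φ : LaurentPolynomial ℤ →+* ℂ) (hφ : φ (LaurentPolynomial.T 1) = -1)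
    (f : M →+ V) (hf : ∀ (r : LaurentPolynomial ℤ) (m : M), f (r • m) = φ r • f m)
    {ι : Type*} (b : ι → M)
    (hgen : Submodule.span (LaurentPolynomial ℤ) (Set.range b) = ⊤)
    (hind : LinearIndependent ℂ fun i => f (b i)) :
    LinearIndependent (LaurentPolynomial ℤ) b ∧
      ∃ B : Module.Basis ι (LaurentPolynomial ℤ) M, ∀ i, B i = b i := by
  have hunit : ¬IsUnit (T 1 + 1 : ℤ[T;T⁻¹]) := fun hu => by
    simpa [hφ] using hu.map φ
  have hli : LinearIndependent ℤ[T;T⁻¹] b := by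
    refine linearIndependent_of_relations_dvd hunit fun s g hs i hi => ?_
    have himage : ∑ j ∈ s, φ (g j) • f (b j) = 0 := by
      simpa only [map_sum, hf, map_zero] using congrArg f hs
    exact T_one_add_one_dvd_of_map_eq_zero φ hφ
      (linearIndependent_iff'.mp hind s (fun j => φ (g j)) himage i hi)
  exact ⟨hli, Module.Basis.mk hli hgen.ge, Module.Basis.mk_apply hli hgen.ge⟩
end

section
/- For any four 2×2 complex matrices x1, x2, x3, x4, the determinant of the 4×4 matrix whose (i,j) entry is tr([[x_i]]·[[x_j]]) is zero (the relation θ^{1234}_{1234} = 0). -/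
/-!
Traceless 2×2 matrices form a 3-dimensional space, so `tr([[y]]·[[z]])` is a bilinear form
evaluated on vectors of `ℂ³`. The Gram matrix of four such vectors therefore factors through
`ℂ³`, has rank at most 3, and is singular.
-/

open Matrix

theorem Matrix.det_mul_eq_zero_of_card_lt {R m n : Type*} [CommRing R] [IsDomain R]
    [Fintype m] [Fintype n] [DecidableEq m] (A : Matrix m n R) (B : Matrix n m R)
    (h : Fintype.card n < Fintype.card m) : (A * B).det = 0 := by
  by_contra hdet
  have hrank : (A * B).rank ≤ Fintype.card n :=
    (rank_mul_le_right A B).trans (rank_le_card_height B)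
  rw [rank_of_det_ne_zero hdet] at hrank
  omega

/-- Coordinates of `[[y]] = !![a, b; c, -a]` as the vector `(a, b, c)`. -/
noncomputable def tracelessCoords (y : M2) : Fin 3 → ℂ := ![(y 0 0 - y 1 1) / 2, y 0 1, y 1 0]

/-- The vector `K (a, b, c) = (2a, c, b)`, where `K` is the matrix of the trace form
in the coordinates `tracelessCoords`. -/
def tracelessDualCoords (y : M2) : Fin 3 → ℂ := ![y 0 0 - y 1 1, y 1 0, y 0 1]

theorem trace_tl_mul_tl (y z : M2) :
    trace (tl y * tl z) = tracelessCoords y ⬝ᵥ tracelessDualCoords z := by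
  simp [tl, tracelessCoords, tracelessDualCoords, trace, mul_apply, Fin.sum_univ_succ,
    one_apply, dotProduct]
  ring

theorem stmt_8 (x : Fin 4 → M2) :
    Matrix.det (Matrix.of fun i j : Fin 4 => Matrix.trace (tl (x i) * tl (x j))) = 0 := by
  have hfactor : (Matrix.of fun i j : Fin 4 => trace (tl (x i) * tl (x j))) =
      Matrix.of (fun i => tracelessCoords (x i)) *
        (Matrix.of fun i => tracelessDualCoords (x i))ᵀ := by
    ext i j
    simp only [of_apply, mul_apply', trace_tl_mul_tl]
    rfl
  rw [hfactor]
  exact det_mul_eq_zero_of_card_lt _ _ (by simp)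
end

section
/- For any five 2×2 complex matrices b, c, a1, a2, a3, one has the type II trace identity s(b,c)·s(a1,a2,a3) − s(a1,c)·s(b,a2,a3) + s(a2,c)·s(b,a1,a3) − s(a3,c)·s(b,a1,a2) = 0. -/
/-- `s(y₁,y₂) = tr([[y₁]]·[[y₂]])`. -/
noncomputable def s2 (y₁ y₂ : M2) : ℂ := Matrix.trace (tl y₁ * tl y₂)

/-- `s(y₁,y₂,y₃) = tr([[y₁]]·[[y₂]]·[[y₃]])`. -/
noncomputable def s3 (y₁ y₂ y₃ : M2) : ℂ := Matrix.trace (tl y₁ * tl y₂ * tl y₃)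

theorem trace_tl (y : M2) : (tl y).trace = 0 := by
  simp [tl, Matrix.trace_fin_two]

namespace Matrix

section CommRing

variable {R : Type*} [CommRing R] {x y z : Matrix (Fin 2) (Fin 2) R}

theorem trace_commutator_eq_zero (x y : Matrix (Fin 2) (Fin 2) R) :
    (x * y - y * x).trace = 0 := by
  rw [trace_sub, trace_mul_comm, sub_self]

theorem mul_add_mul_eq_trace_smul_one_of_trace_eq_zero (hx : x.trace = 0) (hy : y.trace = 0) :
    x * y + y * x = (x * y).trace • 1 := by
  rw [trace_fin_two, add_eq_zero_iff_eq_neg'] at hx hy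
  ext i j
  fin_cases i <;> fin_cases j <;> simp [trace_fin_two, mul_apply, hx, hy] <;> ring

theorem trace_mul_mul_swap_of_trace_eq_zero (hx : x.trace = 0) (hy : y.trace = 0)
    (hz : z.trace = 0) : (y * x * z).trace = -(x * y * z).trace := by
  have h := congrArg (fun m => (m * z).trace) (mul_add_mul_eq_trace_smul_one_of_trace_eq_zero hx hy)
  simp only [add_mul, trace_add, smul_mul_assoc, one_mul, trace_smul, hz, smul_zero] at h
  exact eq_neg_of_add_eq_zero_right h

theorem trace_mul_commutator_of_trace_eq_zero (hx : x.trace = 0) (hy : y.trace = 0)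
    (hz : z.trace = 0) : (x * (y * z - z * y)).trace = 2 * (x * y * z).trace := by
  rw [mul_sub, trace_sub, ← mul_assoc, ← mul_assoc, trace_mul_cycle x z y,
    trace_mul_mul_swap_of_trace_eq_zero hx hy hz]
  ring

theorem mul_mul_eq_of_trace_eq_zero (hx : x.trace = 0) (hy : y.trace = 0) (hz : z.trace = 0) :
    x * y * z = (y * z).trace • x - (x * z).trace • y + z * x * y := by
  have hxz := eq_sub_of_add_eq (mul_add_mul_eq_trace_smul_one_of_trace_eq_zero hx hz)
  have hyz := eq_sub_of_add_eq (mul_add_mul_eq_trace_smul_one_of_trace_eq_zero hy hz)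
  conv_lhs => rw [mul_assoc, hyz, mul_sub, mul_smul_comm, mul_one, ← mul_assoc, hxz, sub_mul,
    smul_mul_assoc, one_mul]
  abel

/-- The matrix form of `(u × v) × w = (u · w) v - (v · w) u`. -/
theorem commutator_commutator_of_trace_eq_zero (hx : x.trace = 0) (hy : y.trace = 0)
    (hz : z.trace = 0) :
    (x * y - y * x) * z - z * (x * y - y * x) =
      (2 : R) • ((y * z).trace • x - (x * z).trace • y) := by
  rw [sub_mul, mul_sub, ← mul_assoc, ← mul_assoc, mul_mul_eq_of_trace_eq_zero hx hy hz,
    mul_mul_eq_of_trace_eq_zero hy hx hz, two_smul]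
  abel

end CommRing

theorem linear_relation_of_trace_eq_zero {K : Type*} [Field K] [NeZero (2 : K)]
    {b a₁ a₂ a₃ : Matrix (Fin 2) (Fin 2) K} (hb : b.trace = 0) (h₁ : a₁.trace = 0)
    (h₂ : a₂.trace = 0) (h₃ : a₃.trace = 0) :
    (a₁ * a₂ * a₃).trace • b - (b * a₂ * a₃).trace • a₁ + (b * a₁ * a₃).trace • a₂
      - (b * a₁ * a₂).trace • a₃ = 0 := by
  set X := a₂ * a₃ - a₃ * a₂
  set Z := b * a₁ - a₁ * b
  have hXZ := commutator_commutator_of_trace_eq_zero h₂ h₃ (trace_commutator_eq_zero b a₁)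
  have hZX := commutator_commutator_of_trace_eq_zero hb h₁ (trace_commutator_eq_zero a₂ a₃)
  have hsum : (X * Z - Z * X) + (Z * X - X * Z) = 0 := by abel
  rw [hXZ, hZX, ← smul_add] at hsum
  rw [trace_mul_commutator_of_trace_eq_zero h₃ hb h₁,
    trace_mul_commutator_of_trace_eq_zero h₂ hb h₁,
    trace_mul_commutator_of_trace_eq_zero h₁ h₂ h₃,
    trace_mul_commutator_of_trace_eq_zero hb h₂ h₃,
    ← trace_mul_cycle b a₁ a₃, ← trace_mul_cycle b a₁ a₂] at hsum
  have h4 : (2 : K) • (2 : K) • ((a₁ * a₂ * a₃).trace • b - (b * a₂ * a₃).trace • a₁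
      + (b * a₁ * a₃).trace • a₂ - (b * a₁ * a₂).trace • a₃) = 0 := by
    rw [← hsum]
    module
  simpa only [smul_eq_zero, two_ne_zero, false_or] using h4

end Matrix

theorem stmt_10 (b c a₁ a₂ a₃ : M2) :
    s2 b c * s3 a₁ a₂ a₃ - s2 a₁ c * s3 b a₂ a₃ + s2 a₂ c * s3 b a₁ a₃
      - s2 a₃ c * s3 b a₁ a₂ = 0 := by
  have hrel := Matrix.linear_relation_of_trace_eq_zero (K := ℂ) (trace_tl b) (trace_tl a₁)
    (trace_tl a₂) (trace_tl a₃)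
  have hpair := congrArg (fun m => (m * tl c).trace) hrel
  simp only [sub_mul, add_mul, smul_mul_assoc, Matrix.trace_sub, Matrix.trace_add,
    Matrix.trace_smul, zero_mul, Matrix.trace_zero, smul_eq_mul] at hpair
  unfold s2 s3
  linear_combination hpair
end

section
/- For any seven 2×2 complex matrices b1, b2, c1, c2, a1, a2, a3, one has the trace identity θ(b1,b2;c1,c2)·s(a1,a2,a3) − θ(b1,a2;c1,c2)·s(a1,b2,a3) + θ(b1,a3;c1,c2)·s(a1,b2,a2) + θ(b2,a2;c1,c2)·s(a1,b1,a3) − θ(b2,a3;c1,c2)·s(a1,b1,a2) + θ(a2,a3;c1,c2)·s(a1,b1,b2) = 0, where θ(u,v;w,z) = s(u,w)·s(v,z) − s(u,z)·s(v,w). -/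
/-- `θ(u,v;w,z) = s(u,w)·s(v,z) − s(u,z)·s(v,w)`. -/
noncomputable def θ2 (u v w z : M2) : ℂ := s2 u w * s2 v z - s2 u z * s2 v w

/-!
The traceless parts of 2×2 matrices form the 3-dimensional space `sl₂`. In the coordinates
`[[y]] = !![p, q; r, -p]`, the form `s(x, y)` is bilinear and `s(x, y, z)` is the determinant of
the three coordinate vectors. So `θ(·, ·; c₁, c₂)` is the wedge of the two linear functionals
`s(·, c₁)`, `s(·, c₂)`, and the left-hand side is the wedge product of this 2-form with the 2-form
`s(a₁, ·, ·)`, evaluated on `b₁, b₂, a₂, a₃`: a 4-form on a 3-dimensional space, hence zero.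
-/

open Matrix

def wedge {R n : Type*} [CommRing R] [Fintype n] (l m u v : n → R) : R :=
  (u ⬝ᵥ l) * (v ⬝ᵥ m) - (u ⬝ᵥ m) * (v ⬝ᵥ l)

theorem wedge_mul_det_shuffle_eq_zero {R : Type*} [CommRing R] (l m a v₁ v₂ v₃ v₄ : Fin 3 → R) :
    wedge l m v₁ v₂ * det (of ![a, v₃, v₄]) - wedge l m v₁ v₃ * det (of ![a, v₂, v₄])
      + wedge l m v₁ v₄ * det (of ![a, v₂, v₃]) + wedge l m v₂ v₃ * det (of ![a, v₁, v₄])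
      - wedge l m v₂ v₄ * det (of ![a, v₁, v₃]) + wedge l m v₃ v₄ * det (of ![a, v₁, v₂]) = 0 := by
  simp only [wedge, det_fin_three, vec3_dotProduct, of_apply, cons_val_zero, cons_val_one,
    cons_val_two, head_cons, tail_cons]
  ring

noncomputable def slCoord (y : M2) : Fin 3 → ℂ := ![(y 0 0 - y 1 1) / 2, y 0 1, y 1 0]

def traceGram : Matrix (Fin 3) (Fin 3) ℂ := !![2, 0, 0; 0, 0, 1; 0, 1, 0]

theorem tl_eq (y : M2) :
    tl y = !![(y 0 0 - y 1 1) / 2, y 0 1; y 1 0, -((y 0 0 - y 1 1) / 2)] := by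
  ext i j
  fin_cases i <;> fin_cases j <;> simp [tl, trace_fin_two] <;> ring

theorem s2_eq_dotProduct (x y : M2) : s2 x y = slCoord x ⬝ᵥ (traceGram *ᵥ slCoord y) := by
  rw [s2, tl_eq, tl_eq, mul_fin_two, trace_fin_two_of]
  simp only [slCoord, traceGram, vec3_dotProduct, mulVec, of_apply, cons_val_zero, cons_val_one,
    cons_val_two, head_cons, tail_cons]
  ring

theorem s3_eq_det (x y z : M2) : s3 x y z = det (of ![slCoord x, slCoord y, slCoord z]) := by
  rw [s3, tl_eq, tl_eq, tl_eq, mul_fin_two, mul_fin_two, trace_fin_two_of, det_fin_three]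
  simp only [slCoord, of_apply, cons_val_zero, cons_val_one, cons_val_two, head_cons, tail_cons]
  ring

theorem θ2_eq_wedge (u v w z : M2) :
    θ2 u v w z =
      wedge (traceGram *ᵥ slCoord w) (traceGram *ᵥ slCoord z) (slCoord u) (slCoord v) := by
  simp only [θ2, wedge, s2_eq_dotProduct]

theorem stmt_11 (b₁ b₂ c₁ c₂ a₁ a₂ a₃ : M2) :
    θ2 b₁ b₂ c₁ c₂ * s3 a₁ a₂ a₃ - θ2 b₁ a₂ c₁ c₂ * s3 a₁ b₂ a₃
      + θ2 b₁ a₃ c₁ c₂ * s3 a₁ b₂ a₂ + θ2 b₂ a₂ c₁ c₂ * s3 a₁ b₁ a₃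
      - θ2 b₂ a₃ c₁ c₂ * s3 a₁ b₁ a₂ + θ2 a₂ a₃ c₁ c₂ * s3 a₁ b₁ b₂ = 0 := by
  simp only [θ2_eq_wedge, s3_eq_det]
  exact wedge_mul_det_shuffle_eq_zero _ _ _ _ _ _ _
end
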